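/- For every integer k ≥ 0, the space P_k(ℝ³; ℝ³) of vector fields with polynomial components of total degree at most k decomposes as the direct sum P_k(ℝ³; ℝ³) = (∇ × P_{k+1}(ℝ³; ℝ³)) ⊕ (x · P_{k-1}(ℝ³)): the subspaces {∇ × v : v a polynomial vector field with components of total degree ≤ k+1} and {x p : p a polynomial of total degree ≤ k−1} together span P_k(ℝ³; ℝ³), and their intersection is {0}. -/

import Mathlib

open MvPolynomial

noncomputable section

/-- `degLE p m` means `p ∈ P_m`: either `p = 0` or the total degree of `p` is at most `m`
(with the convention `P_{-1} = {0}`). -/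
def degLE (p : MvPolynomial (Fin 3) ℝ) (m : ℤ) : Prop :=
  p = 0 ∨ (p.totalDegree : ℤ) ≤ m

/-- The formal curl `∇ × v = (∂₂v₃ − ∂₃v₂, ∂₃v₁ − ∂₁v₃, ∂₁v₂ − ∂₂v₁)` of a polynomial
vector field on `ℝ³`. -/
def pcurl (v : Fin 3 → MvPolynomial (Fin 3) ℝ) : Fin 3 → MvPolynomial (Fin 3) ℝ :=
  ![pderiv 1 (v 2) - pderiv 2 (v 1),
    pderiv 2 (v 0) - pderiv 0 (v 2),
    pderiv 0 (v 1) - pderiv 1 (v 0)]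

/-- The vector field `x p = (x₁p, x₂p, x₃p)`. -/
def xMul (p : MvPolynomial (Fin 3) ℝ) : Fin 3 → MvPolynomial (Fin 3) ℝ :=
  fun i => X i * p

/-!
The Euler operator `E = ∑ xᵢ ∂ᵢ` multiplies each monomial by its degree, so `c + E` is
invertible for `c ≠ 0` (divide the coefficient of `x^m` by `c + |m|`), without raising degrees.
The identity `∇ × (u × x) + x (∇ · u) = (2 + E) u` gives the spanning part with
`u = (2 + E)⁻¹ v`. For the intersection, `∇ · (∇ × w) = 0` while `∇ · (x p) = (3 + E) p`,
so `∇ × w = x p` forces `p = 0`.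
-/

open scoped Matrix

variable {σ R : Type*}

section Degree

variable (σ R) in
def totalDegreeLE [CommSemiring R] (m : ℤ) : Submodule R (MvPolynomial σ R) :=
  restrictSupport R {s | (s.degree : ℤ) ≤ m}

variable [CommSemiring R] {p q : MvPolynomial σ R} {a b m : ℤ}

lemma mem_totalDegreeLE : p ∈ totalDegreeLE σ R m ↔ ∀ s ∈ p.support, (s.degree : ℤ) ≤ m :=
  Iff.rfl

lemma mul_mem_totalDegreeLE (hp : p ∈ totalDegreeLE σ R a) (hq : q ∈ totalDegreeLE σ R b) :
    p * q ∈ totalDegreeLE σ R (a + b) := by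
  classical
  rw [mem_totalDegreeLE] at *
  intro s hs
  obtain ⟨s₁, hs₁, s₂, hs₂, rfl⟩ := Finset.mem_add.mp (support_mul p q hs)
  rw [map_add, Nat.cast_add]
  exact add_le_add (hp s₁ hs₁) (hq s₂ hs₂)

lemma X_mem_totalDegreeLE_one (i : σ) : (X i : MvPolynomial σ R) ∈ totalDegreeLE σ R 1 := by
  simp [X, totalDegreeLE]

lemma pderiv_mem_totalDegreeLE (i : σ) (hp : p ∈ totalDegreeLE σ R m) :
    pderiv i p ∈ totalDegreeLE σ R (m - 1) := by
  classical
  rw [mem_totalDegreeLE] at *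
  intro s hs
  rw [mem_support_iff, coeff_pderiv] at hs
  have := hp _ (mem_support_iff.mpr (left_ne_zero_of_mul hs))
  rw [map_add, Finsupp.degree_single] at this
  push_cast at this
  linarith

end Degree

lemma cross_apply_mem_totalDegreeLE [CommRing R] {a b : ℤ} {u v : Fin 3 → MvPolynomial σ R}
    (hu : ∀ i, u i ∈ totalDegreeLE σ R a) (hv : ∀ i, v i ∈ totalDegreeLE σ R b) (i : Fin 3) :
    (u ⨯₃ v) i ∈ totalDegreeLE σ R (a + b) := by
  fin_cases i <;>
    exact sub_mem (mul_mem_totalDegreeLE (hu _) (hv _)) (mul_mem_totalDegreeLE (hu _) (hv _))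

lemma degLE_iff_mem_totalDegreeLE (p : MvPolynomial (Fin 3) ℝ) (m : ℤ) :
    degLE p m ↔ p ∈ totalDegreeLE (Fin 3) ℝ m := by
  rw [degLE, mem_totalDegreeLE]
  constructor
  · rintro (rfl | hp) s hs
    · simp at hs
    · exact le_trans (Nat.cast_le.mpr (le_totalDegree hs)) hp
  · intro h
    by_cases hp : p = 0
    · exact Or.inl hp
    obtain ⟨s, hs, hsup⟩ := Finset.exists_mem_eq_sup _ (support_nonempty.mpr hp)
      fun s : Fin 3 →₀ ℕ => s.sum fun _ e => e
    exact Or.inr (by rw [totalDegree, hsup]; exact h s hs)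

section Euler

variable [CommSemiring R]

lemma coeff_X_mul_pderiv (i : σ) (p : MvPolynomial σ R) (m : σ →₀ ℕ) :
    coeff m (X i * pderiv i p) = m i * coeff m p := by
  induction p using MvPolynomial.induction_on' with
  | monomial s r =>
    classical
    rw [X_mul_pderiv_monomial, coeff_smul, coeff_monomial]
    split_ifs with h <;> simp [h, nsmul_eq_mul]
  | add p q hp hq => simp only [map_add, mul_add, coeff_add, hp, hq]

variable [Fintype σ]

def shiftedEuler (c : ℕ) (p : MvPolynomial σ R) : MvPolynomial σ R :=
  c • p + ∑ i, X i * pderiv i p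

lemma coeff_shiftedEuler (c : ℕ) (p : MvPolynomial σ R) (m : σ →₀ ℕ) :
    coeff m (shiftedEuler c p) = ((c + m.degree : ℕ) : R) * coeff m p := by
  rw [shiftedEuler, coeff_add, coeff_smul, coeff_sum]
  simp only [coeff_X_mul_pderiv, ← Finset.sum_mul, Finsupp.degree_eq_sum, nsmul_eq_mul]
  push_cast
  ring

end Euler

section InvShiftedEuler

variable [Field R]

def invShiftedEuler (c : ℕ) (p : MvPolynomial σ R) : MvPolynomial σ R :=
  ∑ m ∈ p.support, monomial m (((c + m.degree : ℕ) : R)⁻¹ * coeff m p)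

lemma coeff_invShiftedEuler (c : ℕ) (p : MvPolynomial σ R) (m : σ →₀ ℕ) :
    coeff m (invShiftedEuler c p) = ((c + m.degree : ℕ) : R)⁻¹ * coeff m p := by
  classical
  rw [invShiftedEuler, coeff_sum]
  simp only [coeff_monomial, Finset.sum_ite_eq']
  split_ifs with h
  · rfl
  · rw [notMem_support_iff.mp h, mul_zero]

lemma invShiftedEuler_mem_totalDegreeLE {c : ℕ} {p : MvPolynomial σ R} {m : ℤ}
    (hp : p ∈ totalDegreeLE σ R m) : invShiftedEuler c p ∈ totalDegreeLE σ R m := by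
  rw [mem_totalDegreeLE] at *
  intro s hs
  rw [mem_support_iff, coeff_invShiftedEuler] at hs
  exact hp s (mem_support_iff.mpr (right_ne_zero_of_mul hs))

variable [CharZero R] [Fintype σ] {c : ℕ}

lemma shiftedEuler_invShiftedEuler (hc : c ≠ 0) (p : MvPolynomial σ R) :
    shiftedEuler c (invShiftedEuler c p) = p := by
  ext m
  have : ((c + m.degree : ℕ) : R) ≠ 0 := Nat.cast_ne_zero.mpr (by omega)
  rw [coeff_shiftedEuler, coeff_invShiftedEuler, mul_inv_cancel_left₀ this]

lemma eq_zero_of_shiftedEuler_eq_zero (hc : c ≠ 0) {p : MvPolynomial σ R}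
    (hp : shiftedEuler c p = 0) : p = 0 := by
  ext m
  have : ((c + m.degree : ℕ) : R) ≠ 0 := Nat.cast_ne_zero.mpr (by omega)
  have h := congrArg (coeff m) hp
  rw [coeff_shiftedEuler, coeff_zero] at h
  exact (mul_eq_zero.mp h).resolve_left this

end InvShiftedEuler

section VectorCalculus

lemma pderiv_pderiv_comm [CommSemiring R] (i j : σ) (p : MvPolynomial σ R) :
    pderiv i (pderiv j p) = pderiv j (pderiv i p) := by
  classical
  ext m
  simp only [coeff_pderiv, Finsupp.add_apply, Finsupp.single_apply, add_right_comm m]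
  by_cases h : i = j
  · subst h; rfl
  · simp only [h, Ne.symm h, if_false, add_zero]
    ring

variable [CommSemiring R] [Fintype σ]

def divergence (v : σ → MvPolynomial σ R) : MvPolynomial σ R :=
  ∑ i, pderiv i (v i)

lemma divergence_X_mul (p : MvPolynomial σ R) :
    divergence (fun i => X i * p) = shiftedEuler (Fintype.card σ) p := by
  simp only [divergence, shiftedEuler, pderiv_mul, pderiv_X_self, one_mul,
    Finset.sum_add_distrib, Finset.sum_const, Finset.card_univ]

end VectorCalculus

lemma divergence_pcurl (w : Fin 3 → MvPolynomial (Fin 3) ℝ) : divergence (pcurl w) = 0 := by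
  simp only [divergence, Fin.sum_univ_three, pcurl, Matrix.cons_val_zero, Matrix.cons_val_one,
    Matrix.cons_val_two, Matrix.head_cons, Matrix.tail_cons, map_sub]
  rw [pderiv_pderiv_comm 0 1 (w 2), pderiv_pderiv_comm 0 2 (w 1), pderiv_pderiv_comm 1 2 (w 0)]
  ring

lemma pcurl_cross_X_add_xMul_divergence (u : Fin 3 → MvPolynomial (Fin 3) ℝ) (i : Fin 3) :
    pcurl (u ⨯₃ X) i + xMul (divergence u) i = shiftedEuler 2 (u i) := by
  fin_cases i <;>
    simp [pcurl, cross_apply, xMul, divergence, shiftedEuler, Fin.sum_univ_three,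
      pderiv_X] <;>
    ring

/-- For every `k ≥ 0`,
`P_k(ℝ³;ℝ³) = (∇ × P_{k+1}(ℝ³;ℝ³)) ⊕ (x · P_{k-1}(ℝ³))`: the two subspaces together span
`P_k(ℝ³;ℝ³)` and their intersection is `{0}`. -/
theorem polynomial_decomposition_curl_xmul (k : ℕ) :
    (∀ v : Fin 3 → MvPolynomial (Fin 3) ℝ, (∀ i, degLE (v i) (k : ℤ)) →
      ∃ (w : Fin 3 → MvPolynomial (Fin 3) ℝ) (p : MvPolynomial (Fin 3) ℝ),
        (∀ i, degLE (w i) ((k : ℤ) + 1)) ∧ degLE p ((k : ℤ) - 1) ∧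
        v = fun i => pcurl w i + xMul p i) ∧
    (∀ v : Fin 3 → MvPolynomial (Fin 3) ℝ,
      (∃ w : Fin 3 → MvPolynomial (Fin 3) ℝ,
        (∀ i, degLE (w i) ((k : ℤ) + 1)) ∧ v = pcurl w) →
      (∃ p : MvPolynomial (Fin 3) ℝ, degLE p ((k : ℤ) - 1) ∧ v = xMul p) →
      v = 0) := by
  simp only [degLE_iff_mem_totalDegreeLE]
  refine ⟨fun v hv => ?_, ?_⟩
  · set u := fun i => invShiftedEuler 2 (v i)
    have hu : ∀ i, u i ∈ totalDegreeLE (Fin 3) ℝ k := fun i =>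
      invShiftedEuler_mem_totalDegreeLE (hv i)
    refine ⟨u ⨯₃ X, divergence u, cross_apply_mem_totalDegreeLE hu X_mem_totalDegreeLE_one,
      sum_mem fun i _ => pderiv_mem_totalDegreeLE i (hu i), ?_⟩
    funext i
    rw [pcurl_cross_X_add_xMul_divergence, shiftedEuler_invShiftedEuler two_ne_zero]
  · rintro v ⟨w, -, rfl⟩ ⟨p, -, hp⟩
    have hp0 : shiftedEuler 3 p = 0 :=
      calc shiftedEuler 3 p = divergence (xMul p) := (divergence_X_mul p).symm
        _ = divergence (pcurl w) := by rw [hp]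
        _ = 0 := divergence_pcurl w
    rw [hp, eq_zero_of_shiftedEuler_eq_zero three_ne_zero hp0]
    exact funext fun i => mul_zero (X i)
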